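/- Assume that ⟨α^∨, q⟩ ≥ 0 for every q ∈ Q and that condition (∗)_α holds. If F and F′ are two distinct facets of Q with ⟨ρ_F,α⟩ > 0 and ⟨ρ_{F′},α⟩ > 0, then ρ_F + ρ_{F′} = α^∨|_Ξ (the restriction of α^∨ to Ξ) and m_{F,ω} + m_{F′,ω} = ⟨α^∨,ω⟩. -/

import Mathlib

variable {V : Type*} [AddCommGroup V] [Module ℚ V]

/-- `F` is a facet of the polytope `Q`: a nonempty proper exposed face of
codimension one. -/
def IsFacet (Q F : Set V) : Prop :=
  F.Nonempty ∧ F ≠ Q ∧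
    (∃ (f : V →ₗ[ℚ] ℚ) (c : ℚ), (∀ q ∈ Q, c ≤ f q) ∧ F = {q ∈ Q | f q = c}) ∧
    Module.finrank ℚ ↥((affineSpan ℚ F).direction) + 1 =
      Module.finrank ℚ ↥((affineSpan ℚ Q).direction)

/-- `ρ` and `m` form the primitive inward-pointing normal data of the facet `F` of
the polytope `Q`, relative to the lattice `Ξ` and the base point `ω`: `ρ` represents
an element of `Hom_ℤ(Ξ,ℤ)` (it is integer valued on `Ξ`) which is primitive (it
attains the value `1` on `Ξ`), and the affine functional `q ↦ ρ (q - ω) + m` is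
nonnegative on `Q` and vanishes exactly on `F`. -/
def IsNormalData (Ξ : Submodule ℤ V) (Q : Set V) (ω : V) (F : Set V)
    (ρ : V →ₗ[ℚ] ℚ) (m : ℚ) : Prop :=
  (∀ x ∈ Ξ, ∃ n : ℤ, ρ x = (n : ℚ)) ∧ (∃ x ∈ Ξ, ρ x = 1) ∧
    (∀ q ∈ Q, 0 ≤ ρ (q - ω) + m) ∧ (∀ q ∈ Q, (ρ (q - ω) + m = 0 ↔ q ∈ F))

/-- `α` is a primitive element of the lattice `Ξ`. -/
def IsPrimitiveIn (Ξ : Submodule ℤ V) (α : V) : Prop :=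
  α ∈ Ξ ∧ α ≠ 0 ∧ ∀ (n : ℤ) (x : V), x ∈ Ξ → α = n • x → n = 1 ∨ n = -1

/-!
The two facets `F`, `F'` cannot have the same affine span, because a facet is cut out of `Q` by
its affine span; so by `(∗)_α` one of them, say `F'`, spans `H_{F_α}` and the other spans
`s_α(H_{F_α})`. A primitive integral covector on `Ξ` that is positive on `α` is determined by the
hyperplane of `span Ξ` on which it vanishes. Hence `ρ_{F'} = ρ_{F_α}` on `Ξ`, so `⟨ρ_{F'}, α⟩ = 1`.
Pulling the affine functional of `F'` back along `s_α` then shows that `α^∨ - ρ_{F'}` is constant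
on `F`; it is integral, takes the value `1` on `α`, and so it is the primitive normal `ρ_F`.
Evaluating at a point of `F` gives the relation between the constants.
-/

open Module Submodule

section Hyperplane

variable {K E : Type*} [Field K] [AddCommGroup E] [Module K E]

theorem LinearMap.proportional_of_vanish_on_codimOne {U W : Submodule K E} (hUW : U ≤ W)
    (hdim : finrank K U + 1 = finrank K W) {f g : E →ₗ[K] K} (hfU : ∀ x ∈ U, f x = 0)
    (hgU : ∀ x ∈ U, g x = 0) {a : E} (haW : a ∈ W) (hga : g a ≠ 0) :
    ∀ x ∈ W, f x * g a = f a * g x := by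
  have : FiniteDimensional K W := Module.finite_of_finrank_pos (by omega)
  set g' := g ∘ₗ W.subtype
  have hker : comap W.subtype U = LinearMap.ker g' := by
    refine eq_of_le_of_finrank_eq (fun x hx => hgU x hx) ?_
    have hrange : LinearMap.range g' = ⊤ :=
      eq_top_iff.2 fun t _ => ⟨(t / g a) • ⟨a, haW⟩, by simp [g', hga]⟩
    have := LinearMap.finrank_range_add_finrank_ker g'
    rw [hrange, finrank_top, finrank_self] at this
    rw [(comapSubtypeEquivOfLe hUW).finrank_eq]
    omega
  intro x hxW
  have hx : x - (g x / g a) • a ∈ U := by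
    have : (⟨x, hxW⟩ - (g x / g a) • ⟨a, haW⟩ : W) ∈ LinearMap.ker g' := by
      simp [g', hga]
    simpa [← hker] using this
  have hfx := hfU _ hx
  rw [map_sub, map_smul, smul_eq_mul, sub_eq_zero] at hfx
  rw [hfx]
  field_simp

theorem LinearMap.eq_of_mem_affineSpan {s : Set E} {f : E →ₗ[K] K} {c : K}
    (h : ∀ x ∈ s, f x = c) {x : E} (hx : x ∈ affineSpan K s) : f x = c :=
  AffineMap.eqOn_affineSpan (f := f.toAffineMap) (g := AffineMap.const K E c) h hx

theorem LinearMap.eq_zero_of_mem_direction {s : Set E} {f : E →ₗ[K] K} {c : K}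
    (h : ∀ x ∈ s, f x = c) {v : E} (hv : v ∈ (affineSpan K s).direction) : f v = 0 := by
  rw [direction_affineSpan] at hv
  exact AffineMap.linear_eqOn_vectorSpan (f := f.toAffineMap) (g := AffineMap.const K E c) h hv

end Hyperplane

def IsPrimitiveCovector (Ξ : Submodule ℤ V) (ρ : V →ₗ[ℚ] ℚ) : Prop :=
  (∀ x ∈ Ξ, ∃ n : ℤ, ρ x = n) ∧ ∃ x ∈ Ξ, ρ x = 1

theorem IsPrimitiveCovector.eqOn_of_vanish_on_codimOne {Ξ : Submodule ℤ V} {ρ ρ' : V →ₗ[ℚ] ℚ}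
    (hρ : IsPrimitiveCovector Ξ ρ) (hρ' : IsPrimitiveCovector Ξ ρ') {U : Submodule ℚ V}
    (hU : U ≤ span ℚ (Ξ : Set V)) (hdim : finrank ℚ U + 1 = finrank ℚ (span ℚ (Ξ : Set V)))
    (hρU : ∀ x ∈ U, ρ x = 0) (hρ'U : ∀ x ∈ U, ρ' x = 0) {α : V} (hα : α ∈ Ξ)
    (hpos : 0 < ρ α) (hpos' : 0 < ρ' α) : ∀ x ∈ span ℚ (Ξ : Set V), ρ x = ρ' x := by
  have hprop := LinearMap.proportional_of_vanish_on_codimOne hU hdim hρU hρ'U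
    (subset_span hα) hpos'.ne'
  obtain ⟨y, hyΞ, hy⟩ := hρ.2
  obtain ⟨y', hy'Ξ, hy'⟩ := hρ'.2
  obtain ⟨n, hn⟩ := hρ.1 y' hy'Ξ
  obtain ⟨k, hk⟩ := hρ'.1 y hyΞ
  -- On `span Ξ` we get `ρ = n • ρ'` and `ρ' = k • ρ` with `n = ρ y'`, `k = ρ' y` integers.
  have h1 := hprop y (subset_span hyΞ)
  have h2 := hprop y' (subset_span hy'Ξ)
  rw [hy, one_mul] at h1
  rw [hy', mul_one, hn] at h2
  have hn_pos : 0 < n := by exact_mod_cast pos_of_mul_pos_left (h2 ▸ hpos) hpos'.le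
  have hnk : n * k = 1 := by
    have : ρ' α * (n * k) = ρ' α * 1 := by linear_combination -h1 - ρ α * hk + k * h2
    exact_mod_cast mul_left_cancel₀ hpos'.ne' this
  have hα_eq : ρ' α = ρ α := by
    rw [← h2, Int.eq_one_of_mul_eq_one_right hn_pos.le hnk]
    simp
  intro x hx
  have := hprop x hx
  rw [hα_eq] at this
  exact mul_left_cancel₀ hpos.ne' (by linarith)

theorem IsFacet.subset {Q F : Set V} (hF : IsFacet Q F) : F ⊆ Q := by
  obtain ⟨-, -, ⟨_, _, -, rfl⟩, -⟩ := hF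
  exact Set.sep_subset _ _

namespace IsNormalData

variable {Ξ : Submodule ℤ V} {Q F : Set V} {ω : V} {ρ : V →ₗ[ℚ] ℚ} {m : ℚ}

theorem isPrimitiveCovector (h : IsNormalData Ξ Q ω F ρ m) : IsPrimitiveCovector Ξ ρ :=
  ⟨h.1, h.2.1⟩

theorem apply_eq_of_mem (h : IsNormalData Ξ Q ω F ρ m) (hFQ : F ⊆ Q) :
    ∀ q ∈ F, ρ q = ρ ω - m := by
  intro q hq
  have := (h.2.2.2 q (hFQ hq)).2 hq
  rw [map_sub] at this
  linarith

theorem apply_eq_zero_of_mem_affineSpan (h : IsNormalData Ξ Q ω F ρ m) (hFQ : F ⊆ Q) {x : V}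
    (hx : x ∈ affineSpan ℚ F) : ρ (x - ω) + m = 0 := by
  rw [map_sub, ρ.eq_of_mem_affineSpan (h.apply_eq_of_mem hFQ) hx]
  ring

theorem apply_eq_zero_of_mem_direction (h : IsNormalData Ξ Q ω F ρ m) (hFQ : F ⊆ Q) {v : V}
    (hv : v ∈ (affineSpan ℚ F).direction) : ρ v = 0 :=
  ρ.eq_zero_of_mem_direction (h.apply_eq_of_mem hFQ) hv

end IsNormalData

namespace IsFacet

variable {Ξ : Submodule ℤ V} {Q F : Set V}

theorem eq_inter_affineSpan {ω : V} {ρ : V →ₗ[ℚ] ℚ} {m : ℚ} (hF : IsFacet Q F)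
    (hρ : IsNormalData Ξ Q ω F ρ m) : F = Q ∩ affineSpan ℚ F :=
  Set.Subset.antisymm (fun _ hq => ⟨hF.subset hq, subset_affineSpan ℚ F hq⟩)
    fun q ⟨hqQ, hq⟩ => (hρ.2.2.2 q hqQ).1 (hρ.apply_eq_zero_of_mem_affineSpan hF.subset hq)

theorem eq_of_affineSpan_eq {F' : Set V} {ω : V} {ρ ρ' : V →ₗ[ℚ] ℚ} {m m' : ℚ}
    (hF : IsFacet Q F) (hρ : IsNormalData Ξ Q ω F ρ m) (hF' : IsFacet Q F')
    (hρ' : IsNormalData Ξ Q ω F' ρ' m')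
    (h : (affineSpan ℚ F : Set V) = affineSpan ℚ F') : F = F' := by
  rw [hF.eq_inter_affineSpan hρ, hF'.eq_inter_affineSpan hρ', h]

theorem eqOn_of_vanish_on_direction (hF : IsFacet Q F)
    (hdir : (affineSpan ℚ Q).direction = span ℚ (Ξ : Set V)) {ρ ρ' : V →ₗ[ℚ] ℚ}
    (hρ : IsPrimitiveCovector Ξ ρ) (hρ' : IsPrimitiveCovector Ξ ρ')
    (hρF : ∀ v ∈ (affineSpan ℚ F).direction, ρ v = 0)
    (hρ'F : ∀ v ∈ (affineSpan ℚ F).direction, ρ' v = 0) {α : V} (hα : α ∈ Ξ)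
    (hpos : 0 < ρ α) (hpos' : 0 < ρ' α) : ∀ x ∈ span ℚ (Ξ : Set V), ρ x = ρ' x :=
  hρ.eqOn_of_vanish_on_codimOne hρ'
    (hdir ▸ AffineSubspace.direction_le (affineSpan_mono ℚ hF.subset)) (hdir ▸ hF.2.2.2)
    hρF hρ'F hα hpos hpos'

end IsFacet

theorem direction_affineSpan_eq_span_sub {s : Set V} {ω : V} (hω : ω ∈ s) :
    (affineSpan ℚ s).direction = span ℚ {x : V | ∃ q ∈ s, x = q - ω} := by
  rw [direction_affineSpan, vectorSpan_eq_span_vsub_set_right ℚ hω]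
  congr 1
  ext x
  simp [eq_comm]

theorem normal_add_normal_eq_of_affineSpan_eq_reflection {Ξ : Submodule ℤ V} {Q : Set V}
    {ω : V} (hω : ω ∈ Q) (hdir : (affineSpan ℚ Q).direction = span ℚ (Ξ : Set V))
    {α : V} (hα : α ∈ Ξ) {αv : V →ₗ[ℚ] ℚ} (hαvΞ : ∀ x ∈ Ξ, ∃ n : ℤ, αv x = n)
    (hαvα : αv α = 2) {Fα F F' : Set V} {ρα ρF ρF' : V →ₗ[ℚ] ℚ} {mα mF mF' : ℚ}
    (hFα : IsFacet Q Fα) (hρα : IsNormalData Ξ Q ω Fα ρα mα) (hραα : ρα α = 1)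
    (hF : IsFacet Q F) (hρF : IsNormalData Ξ Q ω F ρF mF) (hρFα : 0 < ρF α)
    (hF' : IsFacet Q F') (hρF' : IsNormalData Ξ Q ω F' ρF' mF') (hρF'α : 0 < ρF' α)
    (hspanF : (affineSpan ℚ F : Set V) = (fun x => x - αv x • α) '' affineSpan ℚ Fα)
    (hspanF' : (affineSpan ℚ F' : Set V) = affineSpan ℚ Fα) :
    (∀ x ∈ Ξ, ρF x + ρF' x = αv x) ∧ mF + mF' = αv ω := by
  have hspanF' : affineSpan ℚ F' = affineSpan ℚ Fα := SetLike.coe_injective hspanF'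
  have hρF'α_one : ρF' α = 1 := by
    rw [← hραα]
    exact hF'.eqOn_of_vanish_on_direction hdir hρF'.isPrimitiveCovector
      hρα.isPrimitiveCovector (fun _ => hρF'.apply_eq_zero_of_mem_direction hF'.subset)
      (hspanF' ▸ fun _ => hρα.apply_eq_zero_of_mem_direction hFα.subset) hα hρF'α
      (by rw [hραα]; exact one_pos) α (subset_span hα)
  -- `s_α` maps the zero set of `ρ_{F'}(· - ω) + m_{F'}` into the locus where this equals `α^∨`.
  have hconst : ∀ x ∈ F, (αv - ρF') x = mF' - ρF' ω := by
    intro x hx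
    obtain ⟨z, hz, rfl⟩ : x ∈ (fun x => x - αv x • α) '' affineSpan ℚ Fα :=
      hspanF ▸ subset_affineSpan ℚ F hx
    have := hρF'.apply_eq_zero_of_mem_affineSpan hF'.subset (hspanF' ▸ hz)
    simp only [LinearMap.sub_apply, map_sub, map_smul, smul_eq_mul, hαvα, hρF'α_one] at this ⊢
    linarith
  have hprim : IsPrimitiveCovector Ξ (αv - ρF') := by
    refine ⟨fun x hx => ?_, α, hα, by simp [hαvα, hρF'α_one]; norm_num⟩
    obtain ⟨a, ha⟩ := hαvΞ x hx
    obtain ⟨b, hb⟩ := hρF'.1 x hx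
    exact ⟨a - b, by simp [ha, hb]⟩
  have hρF_eq := hF.eqOn_of_vanish_on_direction hdir hρF.isPrimitiveCovector hprim
    (fun _ => hρF.apply_eq_zero_of_mem_direction hF.subset)
    (fun _ => (αv - ρF').eq_zero_of_mem_direction hconst) hα hρFα
    (by simp [hαvα, hρF'α_one])
  have hsum : ∀ x ∈ span ℚ (Ξ : Set V), ρF x + ρF' x = αv x := fun x hx => by
    simpa using congrArg (· + ρF' x) (hρF_eq x hx)
  refine ⟨fun x hx => hsum x (subset_span hx), ?_⟩
  obtain ⟨q, hq⟩ := hF.1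
  have hqQ := hF.subset hq
  have hρFq := (hρF.2.2.2 q hqQ).2 hq
  have hconstq := hconst q hq
  have hsumq := hsum (q - ω) (hdir ▸ AffineSubspace.vsub_mem_direction
    (subset_affineSpan ℚ Q hqQ) (subset_affineSpan ℚ Q hω))
  simp only [LinearMap.sub_apply, map_sub] at hρFq hconstq hsumq
  linarith

theorem statement1_general
    (Λ Ξ : Submodule ℤ V) (hΞΛ : Ξ ≤ Λ)
    (Q : Set V)
    (ω : V) (hω : ω ∈ Q)
    (hQfull : Submodule.span ℚ {x : V | ∃ q ∈ Q, x = q - ω} =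
      Submodule.span ℚ (Ξ : Set V))
    (α : V) (hα : IsPrimitiveIn Ξ α)
    (αv : V →ₗ[ℚ] ℚ) (hαvΛ : ∀ x ∈ Λ, ∃ n : ℤ, αv x = (n : ℚ)) (hαvα : αv α = 2)
    (hstar : ∃ (Fα : Set V) (ρα : V →ₗ[ℚ] ℚ) (mα : ℚ),
      IsFacet Q Fα ∧ IsNormalData Ξ Q ω Fα ρα mα ∧ ρα α = 1 ∧
        ∀ (F' : Set V) (ρ' : V →ₗ[ℚ] ℚ) (m' : ℚ),
          IsFacet Q F' → IsNormalData Ξ Q ω F' ρ' m' → 0 < ρ' α →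
            (affineSpan ℚ F' : Set V) = (affineSpan ℚ Fα : Set V) ∨
            (affineSpan ℚ F' : Set V) =
              (fun x => x - αv x • α) '' (affineSpan ℚ Fα : Set V))
    (F F' : Set V) (hFF' : F ≠ F')
    (ρF ρF' : V →ₗ[ℚ] ℚ) (mF mF' : ℚ)
    (hF : IsFacet Q F) (hρF : IsNormalData Ξ Q ω F ρF mF)
    (hF' : IsFacet Q F') (hρF' : IsNormalData Ξ Q ω F' ρF' mF')
    (hFα : 0 < ρF α) (hF'α : 0 < ρF' α) :
    (∀ x ∈ Ξ, ρF x + ρF' x = αv x) ∧ mF + mF' = αv ω := by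
  obtain ⟨Fα, ρα, mα, hFαfacet, hρα, hραα, hspan⟩ := hstar
  have hdir : (affineSpan ℚ Q).direction = span ℚ (Ξ : Set V) := by
    rw [direction_affineSpan_eq_span_sub hω, hQfull]
  have hαvΞ : ∀ x ∈ Ξ, ∃ n : ℤ, αv x = n := fun x hx => hαvΛ x (hΞΛ hx)
  rcases hspan F ρF mF hF hρF hFα with hF₁ | hF₁ <;>
    rcases hspan F' ρF' mF' hF' hρF' hF'α with hF₂ | hF₂
  · exact absurd (hF.eq_of_affineSpan_eq hρF hF' hρF' (hF₁.trans hF₂.symm)) hFF'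
  · obtain ⟨hsum, hm⟩ := normal_add_normal_eq_of_affineSpan_eq_reflection hω hdir hα.1 hαvΞ
      hαvα hFαfacet hρα hραα hF' hρF' hF'α hF hρF hFα hF₂ hF₁
    exact ⟨fun x hx => (add_comm _ _).trans (hsum x hx), (add_comm _ _).trans hm⟩
  · exact normal_add_normal_eq_of_affineSpan_eq_reflection hω hdir hα.1 hαvΞ hαvα hFαfacet
      hρα hραα hF hρF hFα hF' hρF' hF'α hF₁ hF₂
  · exact absurd (hF.eq_of_affineSpan_eq hρF hF' hρF' (hF₁.trans hF₂.symm)) hFF'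

theorem statement1 [FiniteDimensional ℚ V]
    (Λ Ξ : Submodule ℤ V) (hΞΛ : Ξ ≤ Λ) (hΛfg : Λ.FG)
    (hΛspan : Submodule.span ℚ (Λ : Set V) = ⊤)
    (Q : Set V) (hQpoly : ∃ s : Finset V, Q = convexHull ℚ (s : Set V))
    (ω : V) (hω : ω ∈ Q)
    (hQΞ : ∀ q ∈ Q, q - ω ∈ Submodule.span ℚ (Ξ : Set V))
    (hQfull : Submodule.span ℚ {x : V | ∃ q ∈ Q, x = q - ω} =
      Submodule.span ℚ (Ξ : Set V))
    (α : V) (hα : IsPrimitiveIn Ξ α)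
    (αv : V →ₗ[ℚ] ℚ) (hαvΛ : ∀ x ∈ Λ, ∃ n : ℤ, αv x = (n : ℚ)) (hαvα : αv α = 2)
    (hQα : ∀ q ∈ Q, 0 ≤ αv q)
    (hstar : ∃ (Fα : Set V) (ρα : V →ₗ[ℚ] ℚ) (mα : ℚ),
      IsFacet Q Fα ∧ IsNormalData Ξ Q ω Fα ρα mα ∧ ρα α = 1 ∧
        ∀ (F' : Set V) (ρ' : V →ₗ[ℚ] ℚ) (m' : ℚ),
          IsFacet Q F' → IsNormalData Ξ Q ω F' ρ' m' → 0 < ρ' α →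
            (affineSpan ℚ F' : Set V) = (affineSpan ℚ Fα : Set V) ∨
            (affineSpan ℚ F' : Set V) =
              (fun x => x - αv x • α) '' (affineSpan ℚ Fα : Set V))
    (F F' : Set V) (hFF' : F ≠ F')
    (ρF ρF' : V →ₗ[ℚ] ℚ) (mF mF' : ℚ)
    (hF : IsFacet Q F) (hρF : IsNormalData Ξ Q ω F ρF mF)
    (hF' : IsFacet Q F') (hρF' : IsNormalData Ξ Q ω F' ρF' mF')
    (hFα : 0 < ρF α) (hF'α : 0 < ρF' α) :
    (∀ x ∈ Ξ, ρF x + ρF' x = αv x) ∧ mF + mF' = αv ω :=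
  statement1_general Λ Ξ hΞΛ Q ω hω hQfull α hα αv hαvΛ hαvα hstar F F' hFF' ρF ρF' mF mF' hF hρF
    hF' hρF' hFα hF'α
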